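/- Let L = L₀ ⊕ L₁ be a non-degenerate naturally graded Leibniz superalgebra over ℂ with super-nilindex (2,3). Then L is isomorphic to exactly one of the following two non-isomorphic Leibniz superalgebras on a basis {X₁,X₂,Y₁,Y₂,Y₃}: (I) nonzero products [X₁,X₁] = X₂, [Y₁,X₁] = Y₂, [Y₂,X₁] = Y₃, [Y₁,Y₁] = X₂; (II) nonzero products [X₁,X₁] = X₂, [X₁,Y₁] = −Y₂, [X₁,Y₂] = −Y₃, [Y₁,X₁] = Y₂, [Y₂,X₁] = Y₃, [Y₁,Y₁] = X₂. -/
import Mathlib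

/-- The sign `(-1)^(j·k)` for parities `j k : ZMod 2`, as a complex scalar. -/
def ssign (i j : ZMod 2) : ℂ := if i = 1 ∧ j = 1 then -1 else 1

/-- A (complex) Leibniz superalgebra structure on the vector space `V`: a ℤ₂-grading
`g` whose parts are complementary, together with an even bilinear product satisfying
the super Leibniz identity
`[x,[y,z]] = [[x,y],z] − (−1)^{|y||z|}[[x,z],y]` for homogeneous `y, z`. -/
structure LeibnizSuperAlg (V : Type*) [AddCommGroup V] [Module ℂ V] where
  g : ZMod 2 → Submodule ℂ V
  bk : V →ₗ[ℂ] V →ₗ[ℂ] V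
  compl : IsCompl (g 0) (g 1)
  grading : ∀ i j : ZMod 2, ∀ x ∈ g i, ∀ y ∈ g j, bk x y ∈ g (i + j)
  leibniz : ∀ j k : ZMod 2, ∀ x : V, ∀ y ∈ g j, ∀ z ∈ g k,
    bk x (bk y z) = bk (bk x y) z - ssign j k • bk (bk x z) y

namespace LeibnizSuperAlg

variable {V : Type*} [AddCommGroup V] [Module ℂ V]

/-- The descending sequences `C⁰(L_i) = L_i`, `C^{k+1}(L_i) = [C^k(L_i), L₀]`. -/
def C (A : LeibnizSuperAlg V) (i : ZMod 2) : ℕ → Submodule ℂ V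
  | 0 => A.g i
  | k + 1 => Submodule.span ℂ {z | ∃ x ∈ C A i k, ∃ y ∈ A.g 0, z = A.bk x y}

/-- The descending central sequence of the whole superalgebra. -/
def DC (A : LeibnizSuperAlg V) : ℕ → Submodule ℂ V
  | 0 => ⊤
  | k + 1 => Submodule.span ℂ {z | ∃ x ∈ DC A k, ∃ y : V, z = A.bk x y}

/-- Nilpotency: the descending central sequence reaches zero. -/
def IsNilpotent (A : LeibnizSuperAlg V) : Prop := ∃ k, A.DC k = ⊥

/-- `A` is nilpotent with `dim L₀ = n`, `dim L₁ = m` and super-nilindex `(n, m)`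
(the maximal possible value). -/
def HasMaxSNilindex (A : LeibnizSuperAlg V) (n m : ℕ) : Prop :=
  A.IsNilpotent ∧ Module.finrank ℂ (A.g 0) = n ∧ Module.finrank ℂ (A.g 1) = m ∧
    A.C 0 (n - 1) ≠ ⊥ ∧ A.C 1 (m - 1) ≠ ⊥ ∧ A.C 0 n = ⊥ ∧ A.C 1 m = ⊥

/-- Non-degeneracy: the product does not vanish identically on `L₁ × L₁`. -/
def NonDegenerate (A : LeibnizSuperAlg V) : Prop :=
  ∃ x ∈ A.g 1, ∃ y ∈ A.g 1, A.bk x y ≠ 0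

/-- `A` is naturally graded: there are subspaces `W a i` (`i ≥ 1`, parity `a`), splitting
the filtrations `C` (so that `W a i ≅ C^{i-1}(L_a)/C^i(L_a)` and `L ≅ gr(L)` in the
natural way) and compatible with the product (so `gr(L)` is a graded Leibniz
superalgebra, `[Lⁱ, Lʲ] ⊆ L^{i+j}`).  For finite-dimensional nilpotent superalgebras
this is equivalent to the textbook definition `L ≅ gr(L)` with `gr(L)` graded. -/
def NaturallyGraded (A : LeibnizSuperAlg V) : Prop :=
  ∃ W : ZMod 2 → ℕ → Submodule ℂ V,
    (∀ a, W a 0 = ⊥) ∧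
    (∀ a k, A.C a k = W a (k + 1) ⊔ A.C a (k + 1)) ∧
    (∀ a k, W a (k + 1) ⊓ A.C a (k + 1) = ⊥) ∧
    (∀ a b : ZMod 2, ∀ i j : ℕ, ∀ x ∈ W a i, ∀ y ∈ W b j, A.bk x y ∈ W (a + b) (i + j))

/-- `X 1, …, X n` and `Y 1, …, Y m` form an adapted basis of the superalgebra:
the `X i` are even, the `Y j` are odd, and together they form a basis of `V`. -/
def IsAdaptedBasis (A : LeibnizSuperAlg V) (n m : ℕ) (X Y : ℕ → V) : Prop :=
  (∀ i, 1 ≤ i → i ≤ n → X i ∈ A.g 0) ∧ (∀ j, 1 ≤ j → j ≤ m → Y j ∈ A.g 1) ∧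
  LinearIndependent ℂ
    (Sum.elim (fun i : Fin n => X (i.val + 1)) (fun j : Fin m => Y (j.val + 1))) ∧
  Submodule.span ℂ
    (Set.range (Sum.elim (fun i : Fin n => X (i.val + 1)) (fun j : Fin m => Y (j.val + 1)))) = ⊤

end LeibnizSuperAlg

/-- The first (μ₁) naturally graded Leibniz superalgebra of super-nilindex `(2,3)`. -/
def Law23I {V : Type*} [AddCommGroup V] [Module ℂ V] (A : LeibnizSuperAlg V) : Prop :=
  ∃ X Y : ℕ → V, A.IsAdaptedBasis 2 3 X Y ∧
    (∀ i j : ℕ, 1 ≤ i → i ≤ 2 → 1 ≤ j → j ≤ 2 → A.bk (X i) (X j) =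
      if i = 1 ∧ j = 1 then X 2 else 0) ∧
    (∀ i j : ℕ, 1 ≤ i → i ≤ 2 → 1 ≤ j → j ≤ 3 → A.bk (X i) (Y j) =
      0) ∧
    (∀ i j : ℕ, 1 ≤ i → i ≤ 3 → 1 ≤ j → j ≤ 2 → A.bk (Y i) (X j) =
      if j = 1 ∧ i ≤ 2 then Y (i + 1) else 0) ∧
    (∀ i j : ℕ, 1 ≤ i → i ≤ 3 → 1 ≤ j → j ≤ 3 → A.bk (Y i) (Y j) =
      if i = 1 ∧ j = 1 then X 2 else 0)

/-- The second (μ₃) naturally graded Leibniz superalgebra of super-nilindex `(2,3)`. -/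
def Law23II {V : Type*} [AddCommGroup V] [Module ℂ V] (A : LeibnizSuperAlg V) : Prop :=
  ∃ X Y : ℕ → V, A.IsAdaptedBasis 2 3 X Y ∧
    (∀ i j : ℕ, 1 ≤ i → i ≤ 2 → 1 ≤ j → j ≤ 2 → A.bk (X i) (X j) =
      if i = 1 ∧ j = 1 then X 2 else 0) ∧
    (∀ i j : ℕ, 1 ≤ i → i ≤ 2 → 1 ≤ j → j ≤ 3 → A.bk (X i) (Y j) =
      if i = 1 ∧ j ≤ 2 then -Y (j + 1) else 0) ∧
    (∀ i j : ℕ, 1 ≤ i → i ≤ 3 → 1 ≤ j → j ≤ 2 → A.bk (Y i) (X j) =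
      if j = 1 ∧ i ≤ 2 then Y (i + 1) else 0) ∧
    (∀ i j : ℕ, 1 ≤ i → i ≤ 3 → 1 ≤ j → j ≤ 3 → A.bk (Y i) (Y j) =
      if i = 1 ∧ j = 1 then X 2 else 0)

open Module Submodule

/-- A superalgebra of the right dimensions cannot satisfy both laws: in Law I the
product vanishes identically on `L₀ × L₁`, while in Law II it does not. -/
lemma law23_exclusive {V : Type*} [AddCommGroup V] [Module ℂ V] [FiniteDimensional ℂ V]
    (A : LeibnizSuperAlg V)
    (hg0 : Module.finrank ℂ (A.g 0) = 2) (hg1 : Module.finrank ℂ (A.g 1) = 3) :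
    ¬(Law23I A ∧ Law23II A) := by
  rintro ⟨⟨X, Y, ⟨hX, hY, hind, -⟩, -, hXY, -, -⟩, ⟨X', Y', ⟨hX', hY', hind', -⟩, -, hXY', -, -⟩⟩
  -- from Law I: the product vanishes on g0 × g1
  have hXspan : Submodule.span ℂ {X 1, X 2} = A.g 0 := by
    have hindX : LinearIndependent ℂ (fun i : Fin 2 => X (i.val + 1)) := by
      have := hind.comp Sum.inl Sum.inl_injective; simpa using this
    have hrX : Set.range (fun i : Fin 2 => X (i.val + 1)) = {X 1, X 2} := by
      ext v
      constructor
      · rintro ⟨i, rfl⟩; fin_cases i <;> simp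
      · rintro (rfl | rfl)
        · exact ⟨0, rfl⟩
        · exact ⟨1, rfl⟩
    apply eq_of_le_of_finrank_eq
    · rw [span_le]; rintro v (rfl | rfl)
      · exact hX 1 le_rfl (by norm_num)
      · exact hX 2 (by norm_num) le_rfl
    · rw [← hrX, finrank_span_eq_card hindX, hg0]; rfl
  have hYspan : Submodule.span ℂ {Y 1, Y 2, Y 3} = A.g 1 := by
    have hindY : LinearIndependent ℂ (fun j : Fin 3 => Y (j.val + 1)) := by
      have := hind.comp Sum.inr Sum.inr_injective; simpa using this
    have hrY : Set.range (fun j : Fin 3 => Y (j.val + 1)) = {Y 1, Y 2, Y 3} := by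
      ext v
      constructor
      · rintro ⟨i, rfl⟩; fin_cases i <;> simp
      · rintro (rfl | rfl | rfl)
        · exact ⟨0, rfl⟩
        · exact ⟨1, rfl⟩
        · exact ⟨2, rfl⟩
    apply eq_of_le_of_finrank_eq
    · rw [span_le]; rintro v (rfl | rfl | rfl)
      · exact hY 1 le_rfl (by norm_num)
      · exact hY 2 (by norm_num) (by norm_num)
      · exact hY 3 (by norm_num) le_rfl
    · rw [← hrY, finrank_span_eq_card hindY, hg1]; rfl
  have key : ∀ x ∈ A.g 0, ∀ y ∈ A.g 1, A.bk x y = 0 := by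
    intro x hx y hy
    rw [← hXspan, mem_span_pair] at hx
    rw [← hYspan] at hy
    obtain ⟨a, b, rfl⟩ := hx
    rw [show ({Y 1, Y 2, Y 3} : Set V) = insert (Y 1) {Y 2, Y 3} from rfl,
      mem_span_insert] at hy
    obtain ⟨c, z, hz, rfl⟩ := hy
    rw [mem_span_pair] at hz
    obtain ⟨d, e, rfl⟩ := hz
    have z11 := hXY 1 1 le_rfl (by norm_num) le_rfl (by norm_num)
    have z12 := hXY 1 2 le_rfl (by norm_num) (by norm_num) (by norm_num)
    have z13 := hXY 1 3 le_rfl (by norm_num) (by norm_num) le_rfl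
    have z21 := hXY 2 1 (by norm_num) le_rfl le_rfl (by norm_num)
    have z22 := hXY 2 2 (by norm_num) le_rfl (by norm_num) (by norm_num)
    have z23 := hXY 2 3 (by norm_num) le_rfl (by norm_num) le_rfl
    simp [map_add, map_smul, z11, z12, z13, z21, z22, z23]
  -- from Law II: a nonzero product on g0 × g1
  have hY2' : Y' 2 ≠ 0 := by
    have := hind'.ne_zero (Sum.inr (1 : Fin 3)); simpa using this
  have hne : A.bk (X' 1) (Y' 1) ≠ 0 := by
    rw [hXY' 1 1 le_rfl (by norm_num) le_rfl (by norm_num)]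
    simpa using hY2'
  exact hne (key (X' 1) (hX' 1 le_rfl (by norm_num)) (Y' 1) (hY' 1 le_rfl (by norm_num)))

/-- Every non-degenerate naturally graded Leibniz superalgebra of super-nilindex
`(2,3)` is isomorphic to exactly one of two non-isomorphic superalgebras. -/
theorem stmt13 {V : Type*} [AddCommGroup V] [Module ℂ V] [FiniteDimensional ℂ V] (A : LeibnizSuperAlg V)
    (h : A.HasMaxSNilindex 2 3) (hnd : A.NonDegenerate) (hng : A.NaturallyGraded) :
    (Law23I A ∨ Law23II A) ∧ ¬(Law23I A ∧ Law23II A) := by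
  obtain ⟨W, hW0, hWC, hWI, hWmul⟩ := hng
  obtain ⟨-, hg0d, hg1d, hC01ne, hC12ne, hC02, hC13⟩ := h
  refine ⟨?_, law23_exclusive A hg0d hg1d⟩
  -- basic consequences of the grading
  have Cspan : ∀ (a : ZMod 2) (k : ℕ), A.C a (k+1)
      = Submodule.span ℂ {z | ∃ x ∈ A.C a k, ∃ y ∈ A.g 0, z = A.bk x y} := fun a k => rfl
  have hC01ne' : A.C 0 1 ≠ ⊥ := hC01ne
  have hC12ne' : A.C 1 2 ≠ ⊥ := hC12ne
  have hCsucc : ∀ (a : ZMod 2) (k : ℕ), A.C a k = ⊥ → A.C a (k+1) = ⊥ := by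
    intro a k hk
    apply le_bot_iff.mp
    rw [Cspan, span_le]
    rintro z ⟨x, hx, y, hy, rfl⟩
    rw [hk, mem_bot] at hx
    subst hx
    simp
  have hC03 := hCsucc 0 2 hC02
  have hC04 := hCsucc 0 3 hC03
  have hC05 := hCsucc 0 4 hC04
  have hC14 := hCsucc 1 3 hC13
  have hWbot : ∀ (a : ZMod 2) (k : ℕ), A.C a k = ⊥ → W a (k+1) = ⊥ := by
    intro a k hk
    have hh := hWC a k
    rw [hk] at hh
    exact (sup_eq_bot_iff.mp hh.symm).1
  have hW03 := hWbot 0 2 hC02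
  have hW04 := hWbot 0 3 hC03
  have hW05 := hWbot 0 4 hC04
  have hW06 := hWbot 0 5 hC05
  have hW14 := hWbot 1 3 hC13
  have hW15 := hWbot 1 4 hC14
  have hz : ∀ (a b c : ZMod 2) (i j k : ℕ), a + b = c → i + j = k → W c k = ⊥ →
      ∀ x ∈ W a i, ∀ y ∈ W b j, A.bk x y = 0 := by
    intro a b c i j k hab hij hbot x hx y hy
    have hh := hWmul a b i j x hx y hy
    rw [hab, hij, hbot, mem_bot] at hh
    exact hh
  have hm : ∀ (a b c : ZMod 2) (i j k : ℕ), a + b = c → i + j = k →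
      ∀ x ∈ W a i, ∀ y ∈ W b j, A.bk x y ∈ W c k := by
    intro a b c i j k hab hij x hx y hy
    have hh := hWmul a b i j x hx y hy
    rwa [hab, hij] at hh
  -- decomposition of the homogeneous components
  have hC01W : A.C 0 1 = W 0 2 := by
    have hh := hWC 0 1; rwa [hC02, sup_bot_eq] at hh
  have hg0W : A.g 0 = W 0 1 ⊔ W 0 2 := by
    have hh := hWC 0 0; rwa [hC01W] at hh
  have hC12W : A.C 1 2 = W 1 3 := by
    have hh := hWC 1 2; rwa [hC13, sup_bot_eq] at hh
  have hC11W : A.C 1 1 = W 1 2 ⊔ W 1 3 := by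
    have hh := hWC 1 1; rwa [hC12W] at hh
  have hg1W : A.g 1 = W 1 1 ⊔ (W 1 2 ⊔ W 1 3) := by
    have hh := hWC 1 0; rwa [hC11W] at hh
  have hW02ne : W 0 2 ≠ ⊥ := hC01W ▸ hC01ne'
  have hW13ne : W 1 3 ≠ ⊥ := hC12W ▸ hC12ne'
  -- finrank bookkeeping
  have hfr : ∀ p q : Submodule ℂ V, p ⊓ q = ⊥ →
      finrank ℂ ((p ⊔ q : Submodule ℂ V) : Submodule ℂ V) = finrank ℂ p + finrank ℂ q := by
    intro p q hpq
    have hh := Submodule.finrank_sup_add_finrank_inf_eq p q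
    rw [hpq] at hh
    simpa using hh
  have frpos : ∀ p : Submodule ℂ V, p ≠ ⊥ → 1 ≤ finrank ℂ p := by
    intro p hp
    rcases Nat.eq_zero_or_pos (finrank ℂ p) with h0 | h1
    · exact absurd (Submodule.finrank_eq_zero.mp h0) hp
    · exact h1
  have e0 : finrank ℂ (W 0 1) + finrank ℂ (W 0 2) = 2 := by
    have hinf : W 0 1 ⊓ W 0 2 = ⊥ := by
      have hh := hWI 0 0; rwa [hC01W] at hh
    rw [← hfr _ _ hinf, ← hg0W, hg0d]
  have e1 : finrank ℂ (W 1 1) + (finrank ℂ (W 1 2) + finrank ℂ (W 1 3)) = 3 := by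
    have hinf2 : W 1 2 ⊓ W 1 3 = ⊥ := by
      have hh := hWI 1 1; rwa [hC12W] at hh
    have hinf1 : W 1 1 ⊓ (W 1 2 ⊔ W 1 3) = ⊥ := by
      have hh := hWI 1 0; rwa [hC11W] at hh
    rw [← hfr _ _ hinf2, ← hfr _ _ hinf1, ← hg1W, hg1d]
  -- W 0 1 is nonzero
  have hW01ne : W 0 1 ≠ ⊥ := by
    intro hb
    apply hC01ne'
    apply le_bot_iff.mp
    rw [Cspan, span_le]
    rintro z ⟨x, hx, y, hy, rfl⟩
    have hx' : x ∈ W 0 2 := by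
      have hxg : x ∈ A.g 0 := hx
      rwa [hg0W, hb, bot_sup_eq] at hxg
    have hy' : y ∈ W 0 2 := by rwa [hg0W, hb, bot_sup_eq] at hy
    simp only [SetLike.mem_coe, mem_bot]
    exact hz 0 0 0 2 2 4 (by decide) rfl hW04 x hx' y hy'
  -- W 1 2 is nonzero
  have hW12ne : W 1 2 ≠ ⊥ := by
    intro hb
    apply hC12ne'
    apply le_bot_iff.mp
    rw [Cspan, span_le]
    rintro z ⟨x, hx, y, hy, rfl⟩
    have hx' : x ∈ W 1 3 := by rwa [hC11W, hb, bot_sup_eq] at hx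
    rw [hg0W, mem_sup] at hy
    obtain ⟨u, hu, v, hv, rfl⟩ := hy
    simp only [SetLike.mem_coe, mem_bot, map_add]
    rw [hz 1 0 1 3 1 4 (by decide) rfl hW14 x hx' u hu,
      hz 1 0 1 3 2 5 (by decide) rfl hW15 x hx' v hv, add_zero]
  -- W 1 1 is nonzero
  have hW11ne : W 1 1 ≠ ⊥ := by
    intro hb
    have hC11le : A.C 1 1 ≤ W 1 3 := by
      rw [Cspan, span_le]
      rintro z ⟨x, hx, y, hy, rfl⟩
      have hx' : x ∈ W 1 2 ⊔ W 1 3 := by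
        have hxg : x ∈ A.g 1 := hx
        rwa [hg1W, hb, bot_sup_eq] at hxg
      rw [mem_sup] at hx'
      obtain ⟨u, hu, w, hw, rfl⟩ := hx'
      rw [hg0W, mem_sup] at hy
      obtain ⟨p, hp, q, hq, rfl⟩ := hy
      simp only [SetLike.mem_coe, map_add, LinearMap.add_apply]
      rw [hz 1 0 1 2 2 4 (by decide) rfl hW14 u hu q hq,
        hz 1 0 1 3 1 4 (by decide) rfl hW14 w hw p hp,
        hz 1 0 1 3 2 5 (by decide) rfl hW15 w hw q hq, add_zero, add_zero, add_zero]
      exact hm 1 0 1 2 1 3 (by decide) rfl u hu p hp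
    have hle : W 1 2 ≤ A.C 1 2 := by
      rw [hC12W]
      calc W 1 2 ≤ A.C 1 1 := by rw [hC11W]; exact le_sup_left
        _ ≤ W 1 3 := hC11le
    have : W 1 2 = ⊥ := by
      rw [← hWI 1 1]
      exact (inf_eq_left.mpr hle).symm
    exact hW12ne this
  have hW01fr : finrank ℂ (W 0 1) = 1 := by
    have a1 := frpos _ hW01ne; have a2 := frpos _ hW02ne; omega
  have hW02fr : finrank ℂ (W 0 2) = 1 := by
    have a1 := frpos _ hW01ne; have a2 := frpos _ hW02ne; omega
  have hW11fr : finrank ℂ (W 1 1) = 1 := by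
    have a1 := frpos _ hW11ne; have a2 := frpos _ hW12ne; have a3 := frpos _ hW13ne; omega
  have hW12fr : finrank ℂ (W 1 2) = 1 := by
    have a1 := frpos _ hW11ne; have a2 := frpos _ hW12ne; have a3 := frpos _ hW13ne; omega
  have hW13fr : finrank ℂ (W 1 3) = 1 := by
    have a1 := frpos _ hW11ne; have a2 := frpos _ hW12ne; have a3 := frpos _ hW13ne; omega
  -- choose X1 spanning W 0 1
  obtain ⟨X1, hX1W, hX1ne⟩ := (Submodule.ne_bot_iff _).mp hW01ne
  have hW01span : W 0 1 = span ℂ {X1} := by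
    symm
    apply eq_of_le_of_finrank_eq
    · rw [span_le, Set.singleton_subset_iff]; exact hX1W
    · rw [finrank_span_singleton hX1ne, hW01fr]
  -- X2 = [X1, X1] spans W 0 2
  set X2 : V := A.bk X1 X1 with hX2def
  have hX2W : X2 ∈ W 0 2 := hm 0 0 0 1 1 2 (by decide) rfl X1 hX1W X1 hX1W
  have hC01le : A.C 0 1 ≤ span ℂ {X2} := by
    rw [Cspan, span_le]
    rintro z ⟨x, hx, y, hy, rfl⟩
    have hx' : x ∈ W 0 1 ⊔ W 0 2 := by
      have hxg : x ∈ A.g 0 := hx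
      rwa [hg0W] at hxg
    rw [mem_sup] at hx'
    obtain ⟨u, hu, v, hv, rfl⟩ := hx'
    rw [hW01span, mem_span_singleton] at hu
    obtain ⟨a, rfl⟩ := hu
    rw [hg0W, mem_sup] at hy
    obtain ⟨u', hu', w, hw, rfl⟩ := hy
    rw [hW01span, mem_span_singleton] at hu'
    obtain ⟨b, rfl⟩ := hu'
    simp only [SetLike.mem_coe, map_add, map_smul, LinearMap.add_apply, LinearMap.smul_apply]
    rw [hz 0 0 0 1 2 3 (by decide) rfl hW03 X1 hX1W w hw,
      hz 0 0 0 2 1 3 (by decide) rfl hW03 v hv X1 hX1W,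
      hz 0 0 0 2 2 4 (by decide) rfl hW04 v hv w hw]
    simp only [smul_zero, add_zero, zero_add]
    rw [← hX2def]
    exact smul_mem _ _ (smul_mem _ _ (mem_span_singleton_self X2))
  have hX2ne : X2 ≠ 0 := by
    intro h0
    apply hC01ne'
    apply le_bot_iff.mp
    rwa [h0, Submodule.span_zero_singleton] at hC01le
  have hW02span : W 0 2 = span ℂ {X2} := by
    symm
    apply eq_of_le_of_finrank_eq
    · rw [span_le, Set.singleton_subset_iff]; exact hX2W
    · rw [finrank_span_singleton hX2ne, hW02fr]
  -- choose y1 spanning W 1 1, set y2 = [y1, X1], y3 = [y2, X1]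
  obtain ⟨y1, hy1W, hy1ne⟩ := (Submodule.ne_bot_iff _).mp hW11ne
  have hW11span : W 1 1 = span ℂ {y1} := by
    symm
    apply eq_of_le_of_finrank_eq
    · rw [span_le, Set.singleton_subset_iff]; exact hy1W
    · rw [finrank_span_singleton hy1ne, hW11fr]
  set y2 : V := A.bk y1 X1 with hy2def
  have hy2W : y2 ∈ W 1 2 := hm 1 0 1 1 1 2 (by decide) rfl y1 hy1W X1 hX1W
  have hC11le : A.C 1 1 ≤ span ℂ {y2} ⊔ W 1 3 := by
    rw [Cspan, span_le]
    rintro z ⟨x, hx, y, hy, rfl⟩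
    have hx' : x ∈ W 1 1 ⊔ (W 1 2 ⊔ W 1 3) := by
      have hxg : x ∈ A.g 1 := hx
      rwa [hg1W] at hxg
    rw [mem_sup] at hx'
    obtain ⟨u, hu, r, hr, rfl⟩ := hx'
    rw [mem_sup] at hr
    obtain ⟨v, hv, w, hw, rfl⟩ := hr
    rw [hW11span, mem_span_singleton] at hu
    obtain ⟨a, rfl⟩ := hu
    rw [hg0W, mem_sup] at hy
    obtain ⟨p, hp, q, hq, rfl⟩ := hy
    rw [hW01span, mem_span_singleton] at hp
    obtain ⟨b, rfl⟩ := hp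
    simp only [SetLike.mem_coe, map_add, map_smul, LinearMap.add_apply, LinearMap.smul_apply]
    rw [hz 1 0 1 2 2 4 (by decide) rfl hW14 v hv q hq,
      hz 1 0 1 3 1 4 (by decide) rfl hW14 w hw X1 hX1W,
      hz 1 0 1 3 2 5 (by decide) rfl hW15 w hw q hq]
    simp only [add_zero]
    refine add_mem (smul_mem _ _ (add_mem ?_ ?_)) (smul_mem _ _ ?_)
    · exact mem_sup_left (smul_mem _ _ (by rw [← hy2def]; exact mem_span_singleton_self y2))
    · exact mem_sup_right (hm 1 0 1 2 1 3 (by decide) rfl v hv X1 hX1W)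
    · exact mem_sup_right (hm 1 0 1 1 2 3 (by decide) rfl y1 hy1W q hq)
  have hy2ne : y2 ≠ 0 := by
    intro h0
    rw [h0, Submodule.span_zero_singleton, bot_sup_eq] at hC11le
    have hle : W 1 2 ≤ A.C 1 2 := by
      rw [hC12W]
      calc W 1 2 ≤ A.C 1 1 := by rw [hC11W]; exact le_sup_left
        _ ≤ W 1 3 := hC11le
    apply hW12ne
    rw [← hWI 1 1]
    exact (inf_eq_left.mpr hle).symm
  have hW12span : W 1 2 = span ℂ {y2} := by
    symm
    apply eq_of_le_of_finrank_eq
    · rw [span_le, Set.singleton_subset_iff]; exact hy2W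
    · rw [finrank_span_singleton hy2ne, hW12fr]
  set y3 : V := A.bk y2 X1 with hy3def
  have hy3W : y3 ∈ W 1 3 := hm 1 0 1 2 1 3 (by decide) rfl y2 hy2W X1 hX1W
  have hC12le : A.C 1 2 ≤ span ℂ {y3} := by
    rw [Cspan, span_le]
    rintro z ⟨x, hx, y, hy, rfl⟩
    have hx' : x ∈ W 1 2 ⊔ W 1 3 := by rwa [hC11W] at hx
    rw [mem_sup] at hx'
    obtain ⟨v, hv, w, hw, rfl⟩ := hx'
    rw [hW12span, mem_span_singleton] at hv
    obtain ⟨a, rfl⟩ := hv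
    rw [hg0W, mem_sup] at hy
    obtain ⟨p, hp, q, hq, rfl⟩ := hy
    rw [hW01span, mem_span_singleton] at hp
    obtain ⟨b, rfl⟩ := hp
    simp only [SetLike.mem_coe, map_add, map_smul, LinearMap.add_apply, LinearMap.smul_apply]
    rw [hz 1 0 1 2 2 4 (by decide) rfl hW14 y2 hy2W q hq,
      hz 1 0 1 3 1 4 (by decide) rfl hW14 w hw X1 hX1W,
      hz 1 0 1 3 2 5 (by decide) rfl hW15 w hw q hq]
    simp only [smul_zero, add_zero, zero_add]
    exact smul_mem _ _ (smul_mem _ _ (by rw [← hy3def]; exact mem_span_singleton_self y3))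
  have hy3ne : y3 ≠ 0 := by
    intro h0
    apply hC12ne'
    apply le_bot_iff.mp
    rwa [h0, Submodule.span_zero_singleton] at hC12le
  have hW13span : W 1 3 = span ℂ {y3} := by
    symm
    apply eq_of_le_of_finrank_eq
    · rw [span_le, Set.singleton_subset_iff]; exact hy3W
    · rw [finrank_span_singleton hy3ne, hW13fr]
  -- the coefficient e in [y1, y1] = e • X2 is nonzero by non-degeneracy
  obtain ⟨e, hee⟩ : ∃ e : ℂ, e • X2 = A.bk y1 y1 := by
    have hh : A.bk y1 y1 ∈ W 0 2 := hm 1 1 0 1 1 2 (by decide) rfl y1 hy1W y1 hy1W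
    rwa [hW02span, mem_span_singleton] at hh
  have hyyne : A.bk y1 y1 ≠ 0 := by
    intro h0
    obtain ⟨x, hx, y, hy, hne⟩ := hnd
    apply hne
    rw [hg1W, mem_sup] at hx
    obtain ⟨u, hu, r, hr, rfl⟩ := hx
    rw [mem_sup] at hr
    obtain ⟨v, hv, w, hw, rfl⟩ := hr
    rw [hW11span, mem_span_singleton] at hu
    obtain ⟨a, rfl⟩ := hu
    rw [hg1W, mem_sup] at hy
    obtain ⟨u', hu', r', hr', rfl⟩ := hy
    rw [mem_sup] at hr'
    obtain ⟨v', hv', w', hw', rfl⟩ := hr'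
    rw [hW11span, mem_span_singleton] at hu'
    obtain ⟨b, rfl⟩ := hu'
    simp only [map_add, map_smul, LinearMap.add_apply, LinearMap.smul_apply]
    rw [h0,
      hz 1 1 0 1 2 3 (by decide) rfl hW03 y1 hy1W v' hv',
      hz 1 1 0 1 3 4 (by decide) rfl hW04 y1 hy1W w' hw',
      hz 1 1 0 2 1 3 (by decide) rfl hW03 v hv y1 hy1W,
      hz 1 1 0 2 2 4 (by decide) rfl hW04 v hv v' hv',
      hz 1 1 0 2 3 5 (by decide) rfl hW05 v hv w' hw',
      hz 1 1 0 3 1 4 (by decide) rfl hW04 w hw y1 hy1W,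
      hz 1 1 0 3 2 5 (by decide) rfl hW05 w hw v' hv',
      hz 1 1 0 3 3 6 (by decide) rfl hW06 w hw w' hw']
    simp
  have he0 : e ≠ 0 := by
    intro h0
    apply hyyne
    rw [← hee, h0, zero_smul]
  -- rescale y1 so that [Y1, Y1] = X2
  obtain ⟨t, ht⟩ := IsAlgClosed.exists_pow_nat_eq (k := ℂ) e⁻¹ (n := 2) two_pos
  have ht0 : t ≠ 0 := by
    intro h0
    rw [h0] at ht
    simp only [ne_eq, zero_pow, OfNat.ofNat_ne_zero, not_false_eq_true] at ht
    exact he0 (inv_eq_zero.mp ht.symm)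
  set Y1 : V := t • y1 with hY1def
  set Y2 : V := A.bk Y1 X1 with hY2def
  set Y3 : V := A.bk Y2 X1 with hY3def
  have hY2eq : Y2 = t • y2 := by
    rw [hY2def, hY1def, hy2def, map_smul, LinearMap.smul_apply]
  have hY3eq : Y3 = t • y3 := by
    rw [hY3def, hY2eq, hy3def, map_smul, LinearMap.smul_apply]
  have hY1W : Y1 ∈ W 1 1 := smul_mem _ _ hy1W
  have hY2W : Y2 ∈ W 1 2 := hY2eq ▸ smul_mem _ _ hy2W
  have hY3W : Y3 ∈ W 1 3 := hY3eq ▸ smul_mem _ _ hy3W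
  have hY2ne : Y2 ≠ 0 := by rw [hY2eq]; exact smul_ne_zero ht0 hy2ne
  have hY3ne : Y3 ≠ 0 := by rw [hY3eq]; exact smul_ne_zero ht0 hy3ne
  have hYY : A.bk Y1 Y1 = X2 := by
    rw [hY1def, map_smul A.bk t y1, LinearMap.smul_apply, map_smul, ← hee, smul_smul,
      smul_smul, show t * t * e = 1 by rw [show t * t = t ^ 2 by ring, ht, inv_mul_cancel₀ he0],
      one_smul]
  -- memberships in the homogeneous components
  have hX1g : X1 ∈ A.g 0 := by rw [hg0W]; exact mem_sup_left hX1W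
  have hX2g : X2 ∈ A.g 0 := by rw [hg0W]; exact mem_sup_right hX2W
  have hY1g : Y1 ∈ A.g 1 := by rw [hg1W]; exact mem_sup_left hY1W
  have hY2g : Y2 ∈ A.g 1 := by rw [hg1W]; exact mem_sup_right (mem_sup_left hY2W)
  have hY3g : Y3 ∈ A.g 1 := by rw [hg1W]; exact mem_sup_right (mem_sup_right hY3W)
  -- the coefficient a in [X1, Y1] = a • Y2
  obtain ⟨a, ha⟩ : ∃ a : ℂ, A.bk X1 Y1 = a • Y2 := by
    have hh : A.bk X1 Y1 ∈ W 1 2 := hm 0 1 1 1 1 2 (by decide) rfl X1 hX1W Y1 hY1W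
    rw [hW12span, mem_span_singleton] at hh
    obtain ⟨c, hc⟩ := hh
    exact ⟨c / t, by rw [← hc, hY2eq, smul_smul, div_mul_cancel₀ _ ht0]⟩
  -- sign values
  have hs00 : ssign 0 0 = 1 := by
    rw [ssign, if_neg]; rintro ⟨h1, -⟩; exact absurd h1 (by decide)
  have hs10 : ssign 1 0 = 1 := by
    rw [ssign, if_neg]; rintro ⟨-, h1⟩; exact absurd h1 (by decide)
  have hs01 : ssign 0 1 = 1 := by
    rw [ssign, if_neg]; rintro ⟨h1, -⟩; exact absurd h1 (by decide)
  have hs11 : ssign 1 1 = -1 := by rw [ssign, if_pos ⟨rfl, rfl⟩]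
  -- consequences of the super Leibniz identity
  have LZ1 : ∀ x : V, A.bk x X2 = 0 := by
    intro x
    have hh := A.leibniz 0 0 x X1 hX1g X1 hX1g
    rw [hs00, one_smul, sub_self, ← hX2def] at hh
    exact hh
  have LZ2 : A.bk X2 Y1 = 0 := by
    have hh := A.leibniz 1 1 Y1 Y1 hY1g Y1 hY1g
    rw [hYY, hs11, neg_smul, one_smul, sub_neg_eq_add, LZ1 Y1] at hh
    have h2 : (2 : ℂ) • A.bk X2 Y1 = 0 := by rw [two_smul]; exact hh.symm
    have := smul_eq_zero.mp h2
    simpa using this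
  have LZ3 : A.bk X1 Y2 = a • Y3 := by
    have hh := A.leibniz 1 0 X1 Y1 hY1g X1 hX1g
    rw [hs10, one_smul, ← hY2def, ← hX2def, LZ2, sub_zero, ha, map_smul,
      LinearMap.smul_apply, ← hY3def] at hh
    exact hh
  have LZ4 : a * a + a = 0 := by
    have hh := A.leibniz 0 1 X1 X1 hX1g Y1 hY1g
    rw [hs01, one_smul, ← hX2def, LZ2, ha, map_smul, LZ3, map_smul, LinearMap.smul_apply,
      ← hY3def, zero_sub, smul_smul] at hh
    have hh2 : (a * a + a) • Y3 = 0 := by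
      rw [add_smul, hh]
      abel
    rcases smul_eq_zero.mp hh2 with hc | hc
    · exact hc
    · exact absurd hc hY3ne
  have hacase : a = 0 ∨ a = -1 := by
    have hfac : a * (a + 1) = 0 := by ring_nf; linear_combination LZ4
    rcases mul_eq_zero.mp hfac with hc | hc
    · exact Or.inl hc
    · exact Or.inr (by linear_combination hc)
  -- remaining zero products
  have zX2X1 : A.bk X2 X1 = 0 := hz 0 0 0 2 1 3 (by decide) rfl hW03 X2 hX2W X1 hX1W
  have zX1Y3 : A.bk X1 Y3 = 0 := hz 0 1 1 1 3 4 (by decide) rfl hW14 X1 hX1W Y3 hY3W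
  have zX2Y2 : A.bk X2 Y2 = 0 := hz 0 1 1 2 2 4 (by decide) rfl hW14 X2 hX2W Y2 hY2W
  have zX2Y3 : A.bk X2 Y3 = 0 := hz 0 1 1 2 3 5 (by decide) rfl hW15 X2 hX2W Y3 hY3W
  have zY3X1 : A.bk Y3 X1 = 0 := hz 1 0 1 3 1 4 (by decide) rfl hW14 Y3 hY3W X1 hX1W
  have zY1Y2 : A.bk Y1 Y2 = 0 := hz 1 1 0 1 2 3 (by decide) rfl hW03 Y1 hY1W Y2 hY2W
  have zY2Y1 : A.bk Y2 Y1 = 0 := hz 1 1 0 2 1 3 (by decide) rfl hW03 Y2 hY2W Y1 hY1W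
  have zY1Y3 : A.bk Y1 Y3 = 0 := hz 1 1 0 1 3 4 (by decide) rfl hW04 Y1 hY1W Y3 hY3W
  have zY3Y1 : A.bk Y3 Y1 = 0 := hz 1 1 0 3 1 4 (by decide) rfl hW04 Y3 hY3W Y1 hY1W
  have zY2Y2 : A.bk Y2 Y2 = 0 := hz 1 1 0 2 2 4 (by decide) rfl hW04 Y2 hY2W Y2 hY2W
  have zY2Y3 : A.bk Y2 Y3 = 0 := hz 1 1 0 2 3 5 (by decide) rfl hW05 Y2 hY2W Y3 hY3W
  have zY3Y2 : A.bk Y3 Y2 = 0 := hz 1 1 0 3 2 5 (by decide) rfl hW05 Y3 hY3W Y2 hY2W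
  have zY3Y3 : A.bk Y3 Y3 = 0 := hz 1 1 0 3 3 6 (by decide) rfl hW06 Y3 hY3W Y3 hY3W
  -- the adapted basis
  set Xf : ℕ → V := fun n => if n = 1 then X1 else X2 with hXfdef
  set Yf : ℕ → V := fun n => if n = 1 then Y1 else if n = 2 then Y2 else Y3 with hYfdef
  have hXf1 : Xf 1 = X1 := by rw [hXfdef]; norm_num
  have hXf2 : Xf 2 = X2 := by rw [hXfdef]; norm_num
  have hYf1 : Yf 1 = Y1 := by rw [hYfdef]; norm_num
  have hYf2 : Yf 2 = Y2 := by rw [hYfdef]; norm_num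
  have hYf3 : Yf 3 = Y3 := by rw [hYfdef]; norm_num
  have hy1inY : y1 ∈ span ℂ ({Y1} : Set V) :=
    mem_span_singleton.mpr ⟨t⁻¹, by rw [hY1def, smul_smul, inv_mul_cancel₀ ht0, one_smul]⟩
  have hy2inY : y2 ∈ span ℂ ({Y2} : Set V) :=
    mem_span_singleton.mpr ⟨t⁻¹, by rw [hY2eq, smul_smul, inv_mul_cancel₀ ht0, one_smul]⟩
  have hy3inY : y3 ∈ span ℂ ({Y3} : Set V) :=
    mem_span_singleton.mpr ⟨t⁻¹, by rw [hY3eq, smul_smul, inv_mul_cancel₀ ht0, one_smul]⟩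
  have hsetspan : span ℂ ({X1, X2, Y1, Y2, Y3} : Set V) = ⊤ := by
    apply le_antisymm le_top
    rw [← A.compl.sup_eq_top]
    apply sup_le
    · rw [hg0W]
      apply sup_le
      · rw [hW01span, span_le, Set.singleton_subset_iff]
        exact subset_span (by simp)
      · rw [hW02span, span_le, Set.singleton_subset_iff]
        exact subset_span (by simp)
    · rw [hg1W]
      apply sup_le
      · rw [hW11span, span_le, Set.singleton_subset_iff]
        exact span_mono (Set.singleton_subset_iff.mpr (by simp)) hy1inY
      apply sup_le
      · rw [hW12span, span_le, Set.singleton_subset_iff]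
        exact span_mono (Set.singleton_subset_iff.mpr (by simp)) hy2inY
      · rw [hW13span, span_le, Set.singleton_subset_iff]
        exact span_mono (Set.singleton_subset_iff.mpr (by simp)) hy3inY
  have hrange : Set.range
      (Sum.elim (fun i : Fin 2 => Xf (i.val + 1)) (fun j : Fin 3 => Yf (j.val + 1)))
      = ({X1, X2, Y1, Y2, Y3} : Set V) := by
    ext v
    constructor
    · rintro ⟨i, rfl⟩
      rcases i with i | j
      · fin_cases i <;> simp [hXf1, hXf2]
      · fin_cases j <;> simp [hYf1, hYf2, hYf3]
    · rintro (rfl | rfl | rfl | rfl | rfl)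
      · exact ⟨Sum.inl 0, by simp [hXf1]⟩
      · exact ⟨Sum.inl 1, by simp [hXf2]⟩
      · exact ⟨Sum.inr 0, by simp [hYf1]⟩
      · exact ⟨Sum.inr 1, by simp [hYf2]⟩
      · exact ⟨Sum.inr 2, by simp [hYf3]⟩
  have hspanT : span ℂ (Set.range
      (Sum.elim (fun i : Fin 2 => Xf (i.val + 1)) (fun j : Fin 3 => Yf (j.val + 1)))) = ⊤ := by
    rw [hrange]; exact hsetspan
  have hfinV : finrank ℂ V = 5 := by
    have hh := Submodule.finrank_sup_add_finrank_inf_eq (A.g 0) (A.g 1)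
    rw [A.compl.sup_eq_top, A.compl.inf_eq_bot, hg0d, hg1d, finrank_top] at hh
    simpa using hh
  have hindep : LinearIndependent ℂ
      (Sum.elim (fun i : Fin 2 => Xf (i.val + 1)) (fun j : Fin 3 => Yf (j.val + 1))) := by
    apply linearIndependent_of_top_le_span_of_card_eq_finrank
    · rw [hspanT]
    · simp [hfinV]
  have hbasis : A.IsAdaptedBasis 2 3 Xf Yf := by
    refine ⟨?_, ?_, hindep, hspanT⟩
    · intro i h1 h2
      interval_cases i
      · rw [hXf1]; exact hX1g
      · rw [hXf2]; exact hX2g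
    · intro j h1 h2
      interval_cases j
      · rw [hYf1]; exact hY1g
      · rw [hYf2]; exact hY2g
      · rw [hYf3]; exact hY3g
  rcases hacase with ha0 | ha1
  · -- a = 0 : Law I
    left
    refine ⟨Xf, Yf, hbasis, ?_, ?_, ?_, ?_⟩
    · intro i j h1 h2 h3 h4
      interval_cases i <;> interval_cases j <;>
        simp only [hXf1, hXf2] <;> norm_num <;>
        first
          | exact hX2def.symm
          | exact LZ1 _
          | exact zX2X1
    · intro i j h1 h2 h3 h4
      interval_cases i <;> interval_cases j <;>
        simp only [hXf1, hXf2, hYf1, hYf2, hYf3] <;>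
        first
          | exact (by rw [ha, ha0, zero_smul])
          | exact (by rw [LZ3, ha0, zero_smul])
          | exact zX1Y3
          | exact LZ2
          | exact zX2Y2
          | exact zX2Y3
    · intro i j h1 h2 h3 h4
      interval_cases i <;> interval_cases j <;>
        simp only [hXf1, hXf2, hYf1, hYf2, hYf3] <;> norm_num <;>
        first
          | exact hY2def.symm
          | exact hY3def.symm
          | exact zY3X1
          | exact LZ1 _
    · intro i j h1 h2 h3 h4
      interval_cases i <;> interval_cases j <;>
        simp only [hXf1, hXf2, hYf1, hYf2, hYf3] <;> norm_num <;>
        first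
          | exact hYY
          | exact zY1Y2
          | exact zY2Y1
          | exact zY1Y3
          | exact zY3Y1
          | exact zY2Y2
          | exact zY2Y3
          | exact zY3Y2
          | exact zY3Y3
  · -- a = -1 : Law II
    right
    refine ⟨Xf, Yf, hbasis, ?_, ?_, ?_, ?_⟩
    · intro i j h1 h2 h3 h4
      interval_cases i <;> interval_cases j <;>
        simp only [hXf1, hXf2] <;> norm_num <;>
        first
          | exact hX2def.symm
          | exact LZ1 _
          | exact zX2X1
    · intro i j h1 h2 h3 h4
      interval_cases i <;> interval_cases j <;>
        simp only [hXf1, hXf2, hYf1, hYf2, hYf3] <;> norm_num <;>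
        first
          | exact (by rw [ha, ha1, neg_smul, one_smul])
          | exact (by rw [LZ3, ha1, neg_smul, one_smul])
          | exact zX1Y3
          | exact LZ2
          | exact zX2Y2
          | exact zX2Y3
    · intro i j h1 h2 h3 h4
      interval_cases i <;> interval_cases j <;>
        simp only [hXf1, hXf2, hYf1, hYf2, hYf3] <;> norm_num <;>
        first
          | exact hY2def.symm
          | exact hY3def.symm
          | exact zY3X1
          | exact LZ1 _
    · intro i j h1 h2 h3 h4
      interval_cases i <;> interval_cases j <;>
        simp only [hXf1, hXf2, hYf1, hYf2, hYf3] <;> norm_num <;>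
        first
          | exact hYY
          | exact zY1Y2
          | exact zY2Y1
          | exact zY1Y3
          | exact zY3Y1
          | exact zY2Y2
          | exact zY2Y3
          | exact zY3Y2
          | exact zY3Y3
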